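/- arXiv:1206.1764 — 8 statements merged into one kernel-verified Lean document; each statement's English description precedes it below -/
import Mathlib

section
/- Let z : ℕ → ℂ be a sequence with z i ≠ 0 for every i. Then the infinite product ∏ z_i converges unconditionally (i.e., the net of finite partial products over finite subsets of ℕ converges, as in Mathlib's Multipliable) to a nonzero limit if and only if ∑_{i∈ℕ} |1 − z_i| < ∞ (i.e., the function i ↦ ‖1 − z i‖ is Summable). -/
open Filter Topology

/-!
Near `1` the principal logarithm turns finite products into sums, provided every partial
product keeps a positive real part. The Cauchy criterion for the product, read in the group `ℂˣ`,
therefore becomes the Cauchy criterion for `∑ log zᵢ`; in finite dimension that series is then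
absolutely summable, and `‖1 - z‖ ≤ 2 ‖log z‖` near `1`. Conversely, `∑ ‖zᵢ - 1‖ < ∞` makes
`∏ (1 + (zᵢ - 1))` converge, with a nonzero product since no factor vanishes.
-/

section

variable {α G₀ : Type*} [CommGroupWithZero G₀] [TopologicalSpace G₀] [ContinuousMul G₀]
  [ContinuousInv₀ G₀]

theorem HasProd.vanishing_of_ne_zero {f : α → G₀} {a : G₀} (hf : HasProd f a)
    (hf₀ : ∀ i, f i ≠ 0) (ha : a ≠ 0) {e : Set G₀} (he : e ∈ 𝓝 1) :
    ∃ s : Finset α, ∀ t, Disjoint t s → ∏ k ∈ t, f k ∈ e := by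
  have hu : HasProd (fun i ↦ Units.mk0 (f i) (hf₀ i)) (Units.mk0 a ha) :=
    (Units.isEmbedding_val₀.isInducing.hasProd_iff (g := Units.coeHom G₀) _ _).mp hf
  obtain ⟨s, hs⟩ :=
    hu.multipliable.vanishing (Units.continuous_val.continuousAt.preimage_mem_nhds he)
  exact ⟨s, fun t ht ↦ by simpa using hs t ht⟩

end

namespace Complex

variable {ι : Type*} {z : ι → ℂ}

theorem log_prod_of_forall_subset_re_pos {t : Finset ι}
    (h : ∀ s ⊆ t, 0 < (∏ i ∈ s, z i).re) :
    log (∏ i ∈ t, z i) = ∑ i ∈ t, log (z i) := by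
  classical
  induction t using Finset.induction with
  | empty => simp
  | insert a t ha ih =>
    have hza : 0 < (z a).re := by simpa using h {a} (by simp)
    have hzt : 0 < (∏ i ∈ t, z i).re := h t (Finset.subset_insert a t)
    -- both arguments lie in `(-π/2, π/2)`, so `log_mul` applies without a `2πi` correction
    have harg_a := abs_lt.mp (abs_arg_lt_pi_div_two_iff.mpr (Or.inl hza))
    have harg_t := abs_lt.mp (abs_arg_lt_pi_div_two_iff.mpr (Or.inl hzt))
    rw [Finset.prod_insert ha, Finset.sum_insert ha,
      log_mul (ne_of_apply_ne re hza.ne') (ne_of_apply_ne re hzt.ne')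
        ⟨by linarith, by linarith⟩,
      ih fun s hs ↦ h s (hs.trans (Finset.subset_insert a t))]

theorem summable_log_of_hasProd {p : ℂ} (h : HasProd z p) (hz : ∀ i, z i ≠ 0) (hp : p ≠ 0) :
    Summable fun i ↦ log (z i) := by
  refine summable_iff_vanishing.mpr fun e he ↦ ?_
  have hV : {w : ℂ | 0 < w.re} ∩ log ⁻¹' e ∈ 𝓝 1 :=
    Filter.inter_mem (isOpen_lt continuous_const continuous_re |>.mem_nhds (by simp))
      ((continuousAt_clog one_mem_slitPlane).preimage_mem_nhds (by rwa [log_one]))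
  obtain ⟨s, hs⟩ := h.vanishing_of_ne_zero hz hp hV
  refine ⟨s, fun t ht ↦ ?_⟩
  rw [← log_prod_of_forall_subset_re_pos fun r hr ↦ (hs r (ht.mono_left hr)).1]
  exact (hs t ht).2

theorem summable_norm_one_sub_of_summable_log (hz : ∀ i, z i ≠ 0)
    (h : Summable fun i ↦ log (z i)) : Summable fun i ↦ ‖1 - z i‖ := by
  refine (h.norm.mul_left 2).of_norm_bounded_eventually ?_
  filter_upwards [h.norm.tendsto_cofinite_zero.eventually_le_const one_pos] with i hi
  simpa [exp_log (hz i), norm_sub_rev] using norm_exp_sub_one_le hi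

theorem exists_hasProd_ne_zero_of_summable_norm_one_sub (hz : ∀ i, z i ≠ 0)
    (h : Summable fun i ↦ ‖1 - z i‖) : ∃ p : ℂ, p ≠ 0 ∧ HasProd z p := by
  have hw : Summable fun i ↦ ‖z i - 1‖ := by simpa only [norm_sub_rev] using h
  have h_one_add : (fun i ↦ 1 + (z i - 1)) = z := by simp
  refine ⟨∏' i, z i, ?_, ?_⟩
  · simpa only [h_one_add] using tprod_one_add_ne_zero_of_summable (by simpa using hz) hw
  · simpa only [h_one_add] using (Complex.multipliable_one_add_of_summable hw.of_norm).hasProd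

end Complex

/-- **Convergence of infinite products of complex numbers.**
For a sequence `z : ℕ → ℂ` of nonzero complex numbers, the infinite product
`∏ᵢ z i` converges unconditionally (in the sense of `HasProd`) to a nonzero
limit if and only if `∑ᵢ ‖1 - z i‖ < ∞`. -/
theorem infinite_product_converges_iff_summable (z : ℕ → ℂ) (hz : ∀ i, z i ≠ 0) :
    (∃ p : ℂ, p ≠ 0 ∧ HasProd z p) ↔ Summable (fun i => ‖1 - z i‖) := by
  constructor
  · rintro ⟨p, hp, h⟩
    exact Complex.summable_norm_one_sub_of_summable_log hz
      (Complex.summable_log_of_hasProd h hz hp)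
  · exact Complex.exists_hasProd_ne_zero_of_summable_norm_one_sub hz
end

section
/- On the set of sequences g = (g_i) of unit vectors (g_i ∈ H_i, ‖g_i‖ = 1), both the strong equivalence relation ≡ˢ and the weak equivalence relation ≡ʷ are equivalence relations: each is reflexive, symmetric, and transitive. In particular, if ∑_i |1 − ⟨g_i,h_i⟩_i| < ∞ and ∑_i |1 − ⟨h_i,k_i⟩_i| < ∞ for unit-vector sequences g, h, k, then ∑_i |1 − ⟨g_i,k_i⟩_i| < ∞, and likewise with |1 − |⟨·,·⟩|| in place of |1 − ⟨·,·⟩|. -/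
/-!
Both relations are controlled by a quasi-triangle inequality for unit vectors. Since
`1 - ⟪x, z⟫ = (1 - ⟪x, y⟫) + (1 - ⟪y, z⟫) - ⟪x - y, z - y⟫` and `‖x - y‖² = 2 re (1 - ⟪x, y⟫)`,
Cauchy–Schwarz gives `‖1 - ⟪x, z⟫‖ ≤ 2 ‖1 - ⟪x, y⟫‖ + 2 ‖1 - ⟪y, z⟫‖`. Multiplying `x` and `z` by
unimodular scalars that make `⟪x, y⟫` and `⟪y, z⟫` nonnegative reals turns this into the same
inequality for `|1 - ‖⟪·, ·⟫‖|`; summing termwise gives transitivity.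
-/

open RCLike
open scoped InnerProductSpace ComplexConjugate

theorem RCLike.exists_norm_eq_one_conj_mul_eq_norm {𝕜 : Type*} [RCLike 𝕜] (a : 𝕜) :
    ∃ u : 𝕜, ‖u‖ = 1 ∧ conj u * a = ‖a‖ := by
  rcases eq_or_ne a 0 with rfl | ha
  · exact ⟨1, norm_one, by simp⟩
  have hn : (‖a‖ : 𝕜) ≠ 0 := ofReal_ne_zero.mpr (norm_ne_zero_iff.mpr ha)
  refine ⟨a / ‖a‖, by simp [norm_div, ha], ?_⟩
  rw [map_div₀, conj_ofReal, div_mul_eq_mul_div, conj_mul, sq, mul_div_assoc, div_self hn,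
    mul_one]

section UnitVectors

variable {𝕜 E : Type*} [RCLike 𝕜] [NormedAddCommGroup E] [InnerProductSpace 𝕜 E]

theorem norm_one_sub_inner_comm (x y : E) : ‖1 - ⟪y, x⟫_𝕜‖ = ‖1 - ⟪x, y⟫_𝕜‖ := by
  rw [← norm_conj (1 - ⟪y, x⟫_𝕜), map_sub, map_one, inner_conj_symm]

theorem norm_sub_sq_le_two_mul_norm_one_sub_inner {x y : E} (hx : ‖x‖ = 1) (hy : ‖y‖ = 1) :
    ‖x - y‖ ^ 2 ≤ 2 * ‖1 - ⟪x, y⟫_𝕜‖ :=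
  calc ‖x - y‖ ^ 2 = 2 * re (1 - ⟪x, y⟫_𝕜) := by
        rw [norm_sub_sq (𝕜 := 𝕜), hx, hy, map_sub, one_re]; ring
    _ ≤ 2 * ‖1 - ⟪x, y⟫_𝕜‖ := by gcongr; exact re_le_norm _

theorem norm_one_sub_inner_le {x y z : E} (hx : ‖x‖ = 1) (hy : ‖y‖ = 1) (hz : ‖z‖ = 1) :
    ‖1 - ⟪x, z⟫_𝕜‖ ≤ 2 * ‖1 - ⟪x, y⟫_𝕜‖ + 2 * ‖1 - ⟪y, z⟫_𝕜‖ := by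
  have hxy := norm_sub_sq_le_two_mul_norm_one_sub_inner (𝕜 := 𝕜) hx hy
  have hzy := norm_sub_sq_le_two_mul_norm_one_sub_inner (𝕜 := 𝕜) hz hy
  rw [norm_one_sub_inner_comm] at hzy
  have hcs : ‖⟪x - y, z - y⟫_𝕜‖ ≤ ‖x - y‖ * ‖z - y‖ := norm_inner_le_norm _ _
  have hsplit : 1 - ⟪x, z⟫_𝕜 = (1 - ⟪x, y⟫_𝕜) + (1 - ⟪y, z⟫_𝕜) - ⟪x - y, z - y⟫_𝕜 := by
    rw [inner_sub_left, inner_sub_right, inner_sub_right, inner_self_eq_one_of_norm_eq_one hy]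
    ring
  calc ‖1 - ⟪x, z⟫_𝕜‖ ≤ ‖1 - ⟪x, y⟫_𝕜‖ + ‖1 - ⟪y, z⟫_𝕜‖ + ‖⟪x - y, z - y⟫_𝕜‖ := by
        rw [hsplit]; exact (norm_sub_le _ _).trans (by gcongr; exact norm_add_le _ _)
    _ ≤ 2 * ‖1 - ⟪x, y⟫_𝕜‖ + 2 * ‖1 - ⟪y, z⟫_𝕜‖ := by
        nlinarith [sq_nonneg (‖x - y‖ - ‖z - y‖)]

theorem exists_norm_eq_one_norm_one_sub_inner_smul_left (x y : E) :
    ∃ u : 𝕜, ‖u‖ = 1 ∧ ‖1 - ⟪u • x, y⟫_𝕜‖ = |1 - ‖⟪x, y⟫_𝕜‖| := by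
  obtain ⟨u, hu, hphase⟩ := exists_norm_eq_one_conj_mul_eq_norm ⟪x, y⟫_𝕜
  refine ⟨u, hu, ?_⟩
  rw [inner_smul_left, hphase, ← ofReal_one, ← ofReal_sub, norm_ofReal]

theorem abs_one_sub_norm_inner_le {x y z : E} (hx : ‖x‖ = 1) (hy : ‖y‖ = 1) (hz : ‖z‖ = 1) :
    |1 - ‖⟪x, z⟫_𝕜‖| ≤ 2 * |1 - ‖⟪x, y⟫_𝕜‖| + 2 * |1 - ‖⟪y, z⟫_𝕜‖| := by
  obtain ⟨u, hu, hxy⟩ := exists_norm_eq_one_norm_one_sub_inner_smul_left (𝕜 := 𝕜) x y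
  obtain ⟨v, hv, hzy⟩ := exists_norm_eq_one_norm_one_sub_inner_smul_left (𝕜 := 𝕜) z y
  rw [norm_inner_symm, ← norm_one_sub_inner_comm] at hzy
  have hux : ‖u • x‖ = 1 := by rw [norm_smul, hu, hx, one_mul]
  have hvz : ‖v • z‖ = 1 := by rw [norm_smul, hv, hz, one_mul]
  have hphase : ‖⟪u • x, v • z⟫_𝕜‖ = ‖⟪x, z⟫_𝕜‖ := by
    rw [inner_smul_left, inner_smul_right, norm_mul, norm_mul, norm_conj, hu, hv, one_mul, one_mul]
  calc |1 - ‖⟪x, z⟫_𝕜‖| = |‖(1 : 𝕜)‖ - ‖⟪u • x, v • z⟫_𝕜‖| := by rw [hphase, norm_one]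
    _ ≤ ‖1 - ⟪u • x, v • z⟫_𝕜‖ := abs_norm_sub_norm_le _ _
    _ ≤ 2 * ‖1 - ⟪u • x, y⟫_𝕜‖ + 2 * ‖1 - ⟪y, v • z⟫_𝕜‖ := norm_one_sub_inner_le hux hy hvz
    _ = 2 * |1 - ‖⟪x, y⟫_𝕜‖| + 2 * |1 - ‖⟪y, z⟫_𝕜‖| := by rw [hxy, hzy]

end UnitVectors

/-- **Strong and weak equivalence are equivalence relations.**
On the set of sequences of unit vectors in complex Hilbert spaces `Hᵢ`, both
the strong equivalence `g ≡ˢ h ↔ ∑ᵢ ‖1 - ⟨gᵢ,hᵢ⟩‖ < ∞` and the weak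
equivalence `g ≡ʷ h ↔ ∑ᵢ |1 - |⟨gᵢ,hᵢ⟩|| < ∞` are reflexive, symmetric and
transitive. -/
theorem strong_and_weak_equivalence_are_equivalence_relations
    {H : ℕ → Type*} [∀ i, NormedAddCommGroup (H i)] [∀ i, InnerProductSpace ℂ (H i)] :
    -- reflexivity
    (∀ g : ∀ i, H i, (∀ i, ‖g i‖ = 1) →
      Summable (fun i => ‖1 - (inner ℂ (g i) (g i) : ℂ)‖) ∧
      Summable (fun i => |1 - ‖(inner ℂ (g i) (g i) : ℂ)‖|)) ∧
    -- symmetry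
    (∀ g h : ∀ i, H i, (∀ i, ‖g i‖ = 1) → (∀ i, ‖h i‖ = 1) →
      (Summable (fun i => ‖1 - (inner ℂ (g i) (h i) : ℂ)‖) →
        Summable (fun i => ‖1 - (inner ℂ (h i) (g i) : ℂ)‖)) ∧
      (Summable (fun i => |1 - ‖(inner ℂ (g i) (h i) : ℂ)‖|) →
        Summable (fun i => |1 - ‖(inner ℂ (h i) (g i) : ℂ)‖|))) ∧
    -- transitivity
    (∀ g h k : ∀ i, H i, (∀ i, ‖g i‖ = 1) → (∀ i, ‖h i‖ = 1) → (∀ i, ‖k i‖ = 1) →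
      (Summable (fun i => ‖1 - (inner ℂ (g i) (h i) : ℂ)‖) →
        Summable (fun i => ‖1 - (inner ℂ (h i) (k i) : ℂ)‖) →
        Summable (fun i => ‖1 - (inner ℂ (g i) (k i) : ℂ)‖)) ∧
      (Summable (fun i => |1 - ‖(inner ℂ (g i) (h i) : ℂ)‖|) →
        Summable (fun i => |1 - ‖(inner ℂ (h i) (k i) : ℂ)‖|) →
        Summable (fun i => |1 - ‖(inner ℂ (g i) (k i) : ℂ)‖|))) := by
  refine ⟨fun g hg => ?_, fun g h _ _ => ?_, fun g h k hg hh hk => ?_⟩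
  · simp only [inner_self_eq_one_of_norm_eq_one (hg _), sub_self, norm_zero, norm_one, abs_zero]
    exact ⟨summable_zero, summable_zero⟩
  · exact ⟨fun hs => hs.congr fun _ => (norm_one_sub_inner_comm _ _).symm,
      fun hs => hs.congr fun _ => by rw [norm_inner_symm]⟩
  · exact ⟨fun hgh hhk => .of_nonneg_of_le (fun _ => norm_nonneg _)
        (fun i => norm_one_sub_inner_le (hg i) (hh i) (hk i))
        ((hgh.mul_left 2).add (hhk.mul_left 2)),
      fun hgh hhk => .of_nonneg_of_le (fun _ => abs_nonneg _)
        (fun i => abs_one_sub_norm_inner_le (hg i) (hh i) (hk i))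
        ((hgh.mul_left 2).add (hhk.mul_left 2))⟩
end

section
/- For every n ∈ ℕ and every Borel set A ⊆ ℝⁿ, the measure λ∞ of the cylinder set {y ∈ ℝ^ℕ : (y_0, …, y_{n−1}) ∈ A and |y_k| ≤ 1/2 for all k ≥ n} equals the n-dimensional Lebesgue measure of A. In particular λ∞ restricted to such cylinder sets is equivalent to n-dimensional Lebesgue measure. -/
open MeasureTheory

/-- The uniform probability measure on `I = [-1/2, 1/2]`:
Lebesgue measure restricted to `I`. -/
noncomputable def unifI : Measure ℝ := volume.restrict (Set.Icc (-(1/2) : ℝ) (1/2))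

instance : SigmaFinite unifI := by unfold unifI; infer_instance

/-- The `k`-th factor of the measure `μ_n`: Lebesgue measure on `ℝ` for `k < n`
and the uniform measure on `I` for `k ≥ n`. -/
noncomputable def mixedFactor (n k : ℕ) : Measure ℝ := if k < n then volume else unifI

instance (n k : ℕ) : SigmaFinite (mixedFactor n k) := by
  unfold mixedFactor; split <;> infer_instance

/-- `μ : ℕ → Measure (ℕ → ℝ)` is the sequence of measures `μ_n` on `ℝ^ℕ`
(with the product σ-algebra), where `μ_n` is the product measure whose `k`-th
factor is Lebesgue measure for `k < n` and the uniform measure on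
`I = [-1/2, 1/2]` for `k ≥ n`. -/
def IsKPSequence (μ : ℕ → Measure (ℕ → ℝ)) : Prop :=
  ∀ n : ℕ,
    (∀ m : ℕ, n ≤ m → ∀ A : Set (Fin m → ℝ), MeasurableSet A →
      μ n {y : ℕ → ℝ | (fun i : Fin m => y i) ∈ A ∧ ∀ k, m ≤ k → |y k| ≤ 1/2}
        = Measure.pi (fun i : Fin m => mixedFactor n i) A) ∧
    μ n {y : ℕ → ℝ | ∀ m : ℕ, ∃ k, m ≤ k ∧ ¬ |y k| ≤ 1/2} = 0

/-! ### Auxiliary definitions and lemmas -/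

/-- The interval `I = [-1/2, 1/2]`. -/
def KPIset : Set ℝ := Set.Icc (-(1/2) : ℝ) (1/2)

lemma KPIset_measurable : MeasurableSet KPIset := measurableSet_Icc

lemma mem_KPIset_iff {r : ℝ} : r ∈ KPIset ↔ |r| ≤ 1/2 := by
  simp [KPIset, abs_le, Set.mem_Icc]

/-- The tail set `C_j = {y | ∀ k ≥ j, |y k| ≤ 1/2}`. -/
def KPC (j : ℕ) : Set (ℕ → ℝ) := {y | ∀ k, j ≤ k → |y k| ≤ 1/2}

lemma KPC_measurable (j : ℕ) : MeasurableSet (KPC j) := by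
  have : KPC j = ⋂ k, ⋂ (_ : j ≤ k), {y : ℕ → ℝ | |y k| ≤ 1/2} := by
    ext y; simp [KPC]
  rw [this]
  exact MeasurableSet.iInter fun k => MeasurableSet.iInter fun _ =>
    measurableSet_le (measurable_pi_apply k).abs measurable_const

lemma KPC_mono {j j' : ℕ} (h : j ≤ j') : KPC j ⊆ KPC j' :=
  fun y hy k hk => hy k (h.trans hk)

/-- Restricting a product measure to a measurable box is the product of the
restricted factor measures. -/
lemma KP_pi_restrict {M : ℕ} (ν : Fin M → Measure ℝ) [∀ i, SigmaFinite (ν i)]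
    (s : Fin M → Set ℝ) (hs : ∀ i, MeasurableSet (s i)) :
    (Measure.pi ν).restrict (Set.univ.pi s) = Measure.pi (fun i => (ν i).restrict (s i)) := by
  refine (Measure.pi_eq fun t ht => ?_).symm
  rw [Measure.restrict_apply (MeasurableSet.univ_pi ht), ← Set.pi_inter_distrib, Measure.pi_pi]
  exact Finset.prod_congr rfl fun i _ => (Measure.restrict_apply (ht i)).symm

lemma unifI_restrict_KPIset : unifI.restrict KPIset = unifI := by
  rw [unifI, Measure.restrict_restrict KPIset_measurable, KPIset, Set.inter_self]

lemma volume_restrict_KPIset : (volume : Measure ℝ).restrict KPIset = unifI := rfl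

/-- Key uniqueness: all the measures `μ a` with `a ≥ j` agree after restriction to `C_j`. -/
lemma KP_restrict_eq (μ : ℕ → Measure (ℕ → ℝ)) (hμ : IsKPSequence μ)
    (a b j : ℕ) (hja : j ≤ a) (hjb : j ≤ b) :
    (μ a).restrict (KPC j) = (μ b).restrict (KPC j) := by
  classical
  set L : ℕ := max a b with hL
  have hjL : j ≤ L := hja.trans (le_max_left _ _)
  -- the exhausting sequence
  set B : ℕ → Set (ℕ → ℝ) :=
    fun i => cylinder (Finset.range L) (Set.univ.pi fun _ => Set.Icc (-(i : ℝ)) i) with hB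
  -- a generic computation: the measure of (cylinder s S) ∩ C_j under μ c for j ≤ c
  have main : ∀ (s : Finset ℕ) (S : Set (∀ i : s, ℝ)), MeasurableSet S →
      ((μ a).restrict (KPC j)) (cylinder s S) = ((μ b).restrict (KPC j)) (cylinder s S) := by
    intro s S hS
    set M : ℕ := max (max a b) (s.sup id + 1) with hM
    have hMa : a ≤ M := le_trans (le_max_left a b) (le_max_left _ _)
    have hMb : b ≤ M := le_trans (le_max_right a b) (le_max_left _ _)
    have hMj : j ≤ M := hja.trans hMa
    have hMs : ∀ i ∈ s, i < M := fun i hi =>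
      lt_of_lt_of_le (Nat.lt_succ_of_le (Finset.le_sup (f := id) hi)) (le_max_right _ _)
    set A' : Set (Fin M → ℝ) :=
      {x | (fun i : s => x ⟨(i : ℕ), hMs i i.2⟩) ∈ S ∧ ∀ i : Fin M, j ≤ (i : ℕ) → |x i| ≤ 1/2}
      with hA'def
    have hA' : MeasurableSet A' := by
      have hpart1 : MeasurableSet {x : Fin M → ℝ | (fun i : s => x ⟨(i : ℕ), hMs i i.2⟩) ∈ S} :=
        (measurable_pi_lambda _ fun i => measurable_pi_apply _) hS
      have hpart2 : MeasurableSet {x : Fin M → ℝ | ∀ i : Fin M, j ≤ (i : ℕ) → |x i| ≤ 1/2} := by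
        have heq : {x : Fin M → ℝ | ∀ i : Fin M, j ≤ (i : ℕ) → |x i| ≤ 1/2}
            = ⋂ i : Fin M, ⋂ (_ : j ≤ (i : ℕ)), {x : Fin M → ℝ | |x i| ≤ 1/2} := by
          ext x; simp
        rw [heq]
        exact MeasurableSet.iInter fun i => MeasurableSet.iInter fun _ =>
          measurableSet_le (measurable_pi_apply i).abs measurable_const
      exact hpart1.inter hpart2
    have hset : cylinder s S ∩ KPC j
        = {y : ℕ → ℝ | (fun i : Fin M => y i) ∈ A' ∧ ∀ k, M ≤ k → |y k| ≤ 1/2} := by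
      ext y
      simp only [Set.mem_inter_iff, mem_cylinder, Set.mem_setOf_eq, KPC, hA'def]
      constructor
      · rintro ⟨h1, h2⟩
        exact ⟨⟨h1, fun i hi => h2 i hi⟩, fun k hk => h2 k (hMj.trans hk)⟩
      · rintro ⟨⟨h1, h2⟩, h3⟩
        refine ⟨h1, fun k hk => ?_⟩
        rcases lt_or_ge k M with hkM | hkM
        · exact h2 ⟨k, hkM⟩ hk
        · exact h3 k hkM
    have key : ∀ c, j ≤ c → c ≤ M →
        μ c (cylinder s S ∩ KPC j)
          = Measure.pi (fun i : Fin M => (if j ≤ (i : ℕ) then unifI else volume)) A' := by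
      intro c hjc hcM
      rw [hset, (hμ c).1 M hcM A' hA']
      -- now replace each factor by its restriction to the box
      have hsub : A' ⊆ Set.univ.pi fun i : Fin M =>
          (if j ≤ (i : ℕ) then KPIset else Set.univ) := by
        intro x hx i _
        by_cases hji : j ≤ (i : ℕ)
        · simp only [hji, if_true]
          exact mem_KPIset_iff.mpr (hx.2 i hji)
        · simp [hji]
      have h1 : Measure.pi (fun i : Fin M => mixedFactor c i) A'
          = (Measure.pi (fun i : Fin M => mixedFactor c i)).restrict
              (Set.univ.pi fun i : Fin M => (if j ≤ (i : ℕ) then KPIset else Set.univ)) A' := by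
        rw [Measure.restrict_apply hA', Set.inter_eq_self_of_subset_left hsub]
      rw [h1, KP_pi_restrict _ _ (fun i => by split <;>
        [exact KPIset_measurable; exact MeasurableSet.univ])]
      have hfac : (fun i : Fin M =>
            (mixedFactor c i).restrict (if j ≤ (i : ℕ) then KPIset else Set.univ))
          = fun i : Fin M => (if j ≤ (i : ℕ) then unifI else volume) := by
        funext i
        by_cases hji : j ≤ (i : ℕ)
        · simp only [hji, if_true]
          by_cases hic : (i : ℕ) < c
          · rw [mixedFactor, if_pos hic, volume_restrict_KPIset]
          · rw [mixedFactor, if_neg hic, unifI_restrict_KPIset]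
        · have hic : (i : ℕ) < c := lt_of_lt_of_le (Nat.lt_of_not_le hji) hjc
          simp only [hji, if_false, Measure.restrict_univ]
          rw [mixedFactor, if_pos hic]
      rw [hfac]
    rw [Measure.restrict_apply (hS.cylinder), Measure.restrict_apply (hS.cylinder),
      key a hja hMa, key b hjb hMb]
  -- apply the π-system uniqueness lemma
  refine Measure.ext_of_generateFrom_of_iUnion (measurableCylinders (fun _ : ℕ => ℝ)) B
    generateFrom_measurableCylinders.symm isPiSystem_measurableCylinders ?_ ?_ ?_ ?_
  · -- union is univ
    refine Set.eq_univ_iff_forall.mpr fun y => Set.mem_iUnion.mpr ?_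
    refine ⟨(Finset.range L).sup fun k => ⌈|y k|⌉₊, ?_⟩
    rw [hB, mem_cylinder]
    intro k _
    have h1 : |y (k : ℕ)| ≤ (⌈|y (k : ℕ)|⌉₊ : ℝ) := Nat.le_ceil _
    have h2 : (⌈|y (k : ℕ)|⌉₊ : ℝ) ≤ ((Finset.range L).sup fun k => ⌈|y k|⌉₊ : ℕ) := by
      exact_mod_cast Finset.le_sup (f := fun k => ⌈|y k|⌉₊) k.2
    have := h1.trans h2
    rw [abs_le] at this
    exact ⟨this.1, this.2⟩
  · -- each B i is a measurable cylinder
    intro i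
    exact cylinder_mem_measurableCylinders _ _
      (MeasurableSet.univ_pi fun _ => measurableSet_Icc)
  · -- finiteness
    intro i
    set R : ℝ := max (i : ℝ) (1/2) with hR
    have hBmeas : MeasurableSet (B i) :=
      (MeasurableSet.univ_pi fun _ => measurableSet_Icc).cylinder
    rw [Measure.restrict_apply hBmeas]
    have hsub : B i ∩ KPC j
        ⊆ {y : ℕ → ℝ | (fun k : Fin L => y k) ∈ (Set.univ.pi fun _ : Fin L => Set.Icc (-R) R)
            ∧ ∀ k, L ≤ k → |y k| ≤ 1/2} := by
      rintro y ⟨h1, h2⟩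
      rw [hB, mem_cylinder] at h1
      constructor
      · intro k _
        have := h1 ⟨(k : ℕ), Finset.mem_range.mpr k.isLt⟩ (Set.mem_univ _)
        simp only [Set.mem_Icc] at this ⊢
        constructor
        · exact le_trans (neg_le_neg (le_max_left _ _)) this.1
        · exact this.2.trans (le_max_left _ _)
      · exact fun k hk => h2 k (hjL.trans hk)
    have haL : a ≤ L := le_max_left _ _
    have hlt : μ a (B i ∩ KPC j) < ⊤ :=
      calc μ a (B i ∩ KPC j)
        ≤ μ a {y : ℕ → ℝ | (fun k : Fin L => y k) ∈ (Set.univ.pi fun _ : Fin L => Set.Icc (-R) R)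
            ∧ ∀ k, L ≤ k → |y k| ≤ 1/2} := measure_mono hsub
      _ = Measure.pi (fun k : Fin L => mixedFactor a k)
            (Set.univ.pi fun _ : Fin L => Set.Icc (-R) R) :=
          (hμ a).1 L haL _ (MeasurableSet.univ_pi fun _ => measurableSet_Icc)
      _ < ⊤ := by
          rw [Measure.pi_pi]
          refine ENNReal.prod_lt_top fun k _ => ?_
          have hvol : (volume : Measure ℝ) (Set.Icc (-R) R) < ⊤ := by
            rw [Real.volume_Icc]; exact ENNReal.ofReal_lt_top
          have hunif : unifI (Set.Icc (-R) R) ≤ volume (Set.Icc (-R) R) := by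
            rw [unifI]
            exact Measure.restrict_le_self _
          rw [mixedFactor]
          split
          · exact hvol
          · exact lt_of_le_of_lt hunif hvol
    exact hlt.ne
  · -- equality on the π-system
    intro t ht
    obtain ⟨s, S, hS, rfl⟩ := (mem_measurableCylinders t).mp ht
    exact main s S hS

/-- For `m ≤ n`, `μ m` gives no mass to `C_n \ C_m`. -/
lemma KP_diff_null (μ : ℕ → Measure (ℕ → ℝ)) (hμ : IsKPSequence μ)
    {m n : ℕ} (hmn : m ≤ n) : μ m (KPC n \ KPC m) = 0 := by
  classical
  set A₀ : Set (Fin n → ℝ) := {x | ¬ ∀ i : Fin n, m ≤ (i : ℕ) → |x i| ≤ 1/2} with hA₀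
  have hA₀meas : MeasurableSet A₀ := by
    have : A₀ᶜ = ⋂ i : Fin n, ⋂ (_ : m ≤ (i : ℕ)), {x : Fin n → ℝ | |x i| ≤ 1/2} := by
      ext x; simp [hA₀]
    have h2 : MeasurableSet A₀ᶜ := by
      rw [this]
      exact MeasurableSet.iInter fun i => MeasurableSet.iInter fun _ =>
        measurableSet_le (measurable_pi_apply i).abs measurable_const
    simpa using h2.compl
  have hset : KPC n \ KPC m
      = {y : ℕ → ℝ | (fun i : Fin n => y i) ∈ A₀ ∧ ∀ k, n ≤ k → |y k| ≤ 1/2} := by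
    ext y
    simp only [Set.mem_diff, KPC, Set.mem_setOf_eq, hA₀]
    constructor
    · rintro ⟨h1, h2⟩
      refine ⟨fun hall => h2 fun k hk => ?_, h1⟩
      rcases lt_or_ge k n with hkn | hkn
      · exact hall ⟨k, hkn⟩ hk
      · exact h1 k hkn
    · rintro ⟨h1, h2⟩
      refine ⟨h2, fun hall => h1 fun i hi => hall i hi⟩
  rw [hset, (hμ m).1 n hmn A₀ hA₀meas]
  -- A₀ is contained in a null union
  have hunifI : unifI {r : ℝ | ¬ |r| ≤ 1/2} = 0 := by
    rw [unifI, Measure.restrict_apply' measurableSet_Icc]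
    have hempty : {r : ℝ | ¬ |r| ≤ 1/2} ∩ Set.Icc (-(1/2) : ℝ) (1/2) = ∅ := by
      ext r
      simp only [Set.mem_inter_iff, Set.mem_setOf_eq, Set.mem_Icc, Set.mem_empty_iff_false,
        iff_false, not_and]
      rintro h1 h2
      exact fun h3 => h1 (abs_le.mpr ⟨h2, h3⟩)
    rw [hempty]
    exact measure_empty
  have hsub : A₀ ⊆ ⋃ i : Fin n,
      (if m ≤ (i : ℕ) then (Function.eval i ⁻¹' {r : ℝ | ¬ |r| ≤ 1/2}) else ∅) := by
    intro x hx
    rw [hA₀] at hx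
    push_neg at hx
    obtain ⟨i, him, hbad⟩ := hx
    refine Set.mem_iUnion.mpr ⟨i, ?_⟩
    rw [if_pos him]
    simp only [Set.mem_preimage, Function.eval, Set.mem_setOf_eq]
    exact not_le.mpr hbad
  refine measure_mono_null hsub (measure_iUnion_null fun i => ?_)
  by_cases him : m ≤ (i : ℕ)
  · rw [if_pos him]
    refine Measure.pi_eval_preimage_null _ ?_
    rw [mixedFactor, if_neg (by omega)]
    exact hunifI
  · rw [if_neg him]; exact measure_empty

/-- **`λ∞` agrees with `n`-dimensional Lebesgue measure on cylinder sets.**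
For every `n` and every Borel set `A ⊆ ℝⁿ`, the `λ∞ = ⨆ₘ μₘ`-measure of the
cylinder `{y | (y_0, …, y_{n-1}) ∈ A ∧ ∀ k ≥ n, |y k| ≤ 1/2}` equals the
`n`-dimensional Lebesgue measure of `A`. -/
theorem lambdaInfty_cylinder_eq_lebesgue
    (μ : ℕ → Measure (ℕ → ℝ)) (hμ : IsKPSequence μ)
    (n : ℕ) (A : Set (Fin n → ℝ)) (hA : MeasurableSet A) :
    (⨆ m, μ m) {y : ℕ → ℝ | (fun i : Fin n => y i) ∈ A ∧ ∀ k, n ≤ k → |y k| ≤ 1/2}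
      = volume A := by
  classical
  set Sset : Set (ℕ → ℝ) :=
    {y : ℕ → ℝ | (fun i : Fin n => y i) ∈ A ∧ ∀ k, n ≤ k → |y k| ≤ 1/2} with hSset
  have hCn : MeasurableSet (KPC n) := KPC_measurable n
  have hSsub : Sset ⊆ KPC n := fun y hy => hy.2
  have hSmeas : MeasurableSet Sset := by
    have : Sset = ((fun y : ℕ → ℝ => fun i : Fin n => y i) ⁻¹' A) ∩ KPC n := by
      ext y; simp [hSset, KPC, Set.mem_setOf_eq]
    rw [this]
    exact ((measurable_pi_lambda _ fun i => measurable_pi_apply _) hA).inter hCn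
  -- the value under μ n
  have hSn : μ n Sset = volume A := by
    rw [hSset, (hμ n).1 n le_rfl A hA]
    have hfac : (fun i : Fin n => mixedFactor n i) = fun _ : Fin n => (volume : Measure ℝ) :=
      funext fun i => by rw [mixedFactor, if_pos i.isLt]
    rw [hfac, ← MeasureTheory.volume_pi]
  -- key inequality
  have keyIneq : ∀ m, ∀ s : Set (ℕ → ℝ), MeasurableSet s →
      μ m (s ∩ KPC n) ≤ μ n (s ∩ KPC n) := by
    intro m s hs
    rcases le_total n m with hnm | hmn
    · have heq := KP_restrict_eq μ hμ m n n hnm le_rfl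
      refine le_of_eq ?_
      calc μ m (s ∩ KPC n) = ((μ m).restrict (KPC n)) s := (Measure.restrict_apply hs).symm
        _ = ((μ n).restrict (KPC n)) s := by rw [heq]
        _ = μ n (s ∩ KPC n) := Measure.restrict_apply hs
    · have hnull : μ m ((s ∩ KPC n) \ KPC m) = 0 :=
        measure_mono_null (Set.diff_subset_diff_left Set.inter_subset_right)
          (KP_diff_null μ hμ hmn)
      have heq := KP_restrict_eq μ hμ m n m le_rfl hmn
      have hmeas : MeasurableSet (s ∩ KPC n) := hs.inter hCn
      calc μ m (s ∩ KPC n)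
          = μ m ((s ∩ KPC n) ∩ KPC m) + μ m ((s ∩ KPC n) \ KPC m) :=
            (measure_inter_add_diff _ (KPC_measurable m)).symm
        _ = μ m ((s ∩ KPC n) ∩ KPC m) := by rw [hnull, add_zero]
        _ = ((μ m).restrict (KPC m)) (s ∩ KPC n) := (Measure.restrict_apply hmeas).symm
        _ = ((μ n).restrict (KPC m)) (s ∩ KPC n) := by rw [heq]
        _ = μ n ((s ∩ KPC n) ∩ KPC m) := Measure.restrict_apply hmeas
        _ ≤ μ n (s ∩ KPC n) := measure_mono Set.inter_subset_left
  refine le_antisymm ?_ ?_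
  · -- upper bound via an explicit upper bound measure
    set ν : Measure (ℕ → ℝ) :=
      (μ n).restrict (KPC n) + (Measure.sum μ).restrict (KPC n)ᶜ with hν
    have hub : ∀ m, μ m ≤ ν := by
      intro m
      refine Measure.le_iff.mpr fun s hs => ?_
      have hdecomp : μ m s = μ m (s ∩ KPC n) + μ m (s \ KPC n) :=
        (measure_inter_add_diff s hCn).symm
      have hb2 : μ m (s \ KPC n) ≤ (Measure.sum μ) (s ∩ (KPC n)ᶜ) := by
        rw [Set.diff_eq]
        exact Measure.le_sum μ m _
      calc μ m s = μ m (s ∩ KPC n) + μ m (s \ KPC n) := hdecomp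
        _ ≤ μ n (s ∩ KPC n) + (Measure.sum μ) (s ∩ (KPC n)ᶜ) :=
            add_le_add (keyIneq m s hs) hb2
        _ = ν s := by
            rw [hν, Measure.add_apply, Measure.restrict_apply hs, Measure.restrict_apply hs]
    have h1 : (⨆ m, μ m) ≤ ν := iSup_le hub
    calc (⨆ m, μ m) Sset ≤ ν Sset := h1 Sset
      _ = μ n (Sset ∩ KPC n) + (Measure.sum μ) (Sset ∩ (KPC n)ᶜ) := by
          rw [hν, Measure.add_apply, Measure.restrict_apply hSmeas,
            Measure.restrict_apply hSmeas]
      _ = volume A := by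
          rw [Set.inter_eq_self_of_subset_left hSsub]
          have : Sset ∩ (KPC n)ᶜ = ∅ := by
            rw [Set.eq_empty_iff_forall_notMem]
            rintro y ⟨hy1, hy2⟩
            exact hy2 (hSsub hy1)
          rw [this, measure_empty, add_zero, hSn]
  · -- lower bound
    calc volume A = μ n Sset := hSn.symm
      _ ≤ (⨆ m, μ m) Sset := (le_iSup μ n) Sset
end

section
/- Let σ : ℕ → ℝ be a sequence with ∑_{k} σ_k² < ∞, and let μ^σ = ⊗_{k∈ℕ} gaussianReal 0 (σ_k²) be the product Gaussian measure on ℝ^ℕ. Then for every L > 0, μ^σ({a ∈ ℝ^ℕ : |a_k| ≤ L for all k}) > 0. -/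
/-!
The cube is the decreasing intersection of the cylinders `{a | ∀ k < n, |a k| ≤ L}`, whose
measures are the partial products of `p k = gaussianReal 0 (σ k ^ 2) [-L, L]`, so its
measure is `∏' k, p k`. Each `p k` is positive, and Chebyshev's inequality gives
`1 - p k ≤ σ k ^ 2 / L ^ 2`, which is summable; an infinite product of positive factors with `∑ |p k - 1| < ∞` is positive.
-/

open MeasureTheory ProbabilityTheory Filter Topology Finset NNReal

lemma Real.multipliable_of_summable_abs_sub_one {ι : Type*} {p : ι → ℝ}
    (hp : Summable fun i ↦ |p i - 1|) : Multipliable p := by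
  simpa using multipliable_one_add_of_summable (f := fun i ↦ p i - 1) hp

lemma Real.tprod_pos_of_summable_abs_sub_one {ι : Type*} {p : ι → ℝ} (hpos : ∀ i, 0 < p i)
    (hp : Summable fun i ↦ |p i - 1|) : 0 < ∏' i, p i := by
  refine (tprod_nonneg fun i ↦ (hpos i).le).lt_of_ne' ?_
  simpa using tprod_one_add_ne_zero_of_summable (f := fun i ↦ p i - 1)
    (fun i ↦ by simpa using (hpos i).ne') hp

lemma gaussianReal_pos_of_mem_nhds {m : ℝ} {v : ℝ≥0} {s : Set ℝ} (hs : s ∈ 𝓝 m) :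
    0 < gaussianReal m v s := by
  rcases eq_or_ne v 0 with rfl | hv
  · simp [Measure.dirac_apply_of_mem (mem_of_mem_nhds hs)]
  · exact pos_iff_ne_zero.2 fun h ↦
      (Measure.measure_pos_of_mem_nhds volume hs).ne' (gaussianReal_absolutelyContinuous' m hv h)

lemma one_sub_div_sq_le_gaussianReal_abs_sub_le (m : ℝ) (v : ℝ≥0) {c : ℝ} (hc : 0 < c) :
    1 - v / c ^ 2 ≤ (gaussianReal m v).real {x | |x - m| ≤ c} := by
  have hmeas : MeasurableSet {x : ℝ | |x - m| ≤ c} :=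
    measurableSet_le (by fun_prop) measurable_const
  have hcheb := meas_ge_le_variance_div_sq (memLp_id_gaussianReal (μ := m) (v := v) 2) hc
  simp only [id, integral_id_gaussianReal, variance_id_gaussianReal] at hcheb
  have htail : (gaussianReal m v).real {x | |x - m| ≤ c}ᶜ ≤ v / c ^ 2 := by
    refine ENNReal.toReal_le_of_le_ofReal (by positivity)
      ((measure_mono fun x hx ↦ ?_).trans hcheb)
    exact (not_le.1 (Set.notMem_ofPred_iff.1 hx)).le
  rw [probReal_compl_eq_one_sub hmeas] at htail
  linarith

lemma tendsto_prod_range_measure_of_map_eq_pi {X : Type*} [MeasurableSpace X]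
    {μ : Measure (ℕ → X)} [IsFiniteMeasure μ] {ν : ℕ → Measure X} [∀ i, SigmaFinite (ν i)]
    (hμ : ∀ n : ℕ, μ.map (fun a (i : Fin n) ↦ a i) = Measure.pi fun i : Fin n ↦ ν i)
    {s : ℕ → Set X} (hs : ∀ i, MeasurableSet (s i)) :
    Tendsto (fun n ↦ ∏ i ∈ range n, ν i (s i)) atTop (𝓝 (μ {a | ∀ k, a k ∈ s k})) := by
  set C : ℕ → Set (ℕ → X) := fun n ↦ (fun a (i : Fin n) ↦ a i) ⁻¹' Set.univ.pi fun i ↦ s i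
  have hproj (n : ℕ) : Measurable fun (a : ℕ → X) (i : Fin n) ↦ a i := by fun_prop
  have hC (n : ℕ) : μ (C n) = ∏ i ∈ range n, ν i (s i) := by
    rw [← Measure.map_apply (hproj n) (MeasurableSet.univ_pi fun i ↦ hs i), hμ, Measure.pi_pi,
      Fin.prod_univ_eq_prod_range (fun i ↦ ν i (s i))]
  have hanti : Antitone C := fun m n hmn a ha i _ ↦ ha ⟨i, i.2.trans_le hmn⟩ trivial
  have hinter : ⋂ n, C n = {a | ∀ k, a k ∈ s k} := by
    ext a
    simp only [C, Set.mem_iInter, Set.mem_preimage, Set.mem_univ_pi, Set.mem_ofPred_eq]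
    exact ⟨fun h k ↦ h (k + 1) ⟨k, k.lt_succ_self⟩, fun h n i ↦ h i⟩
  simp_rw [← hC, ← hinter]
  exact tendsto_measure_iInter_atTop
    (fun n ↦ ((hproj n) (.univ_pi fun i ↦ hs i)).nullMeasurableSet) hanti ⟨0, measure_ne_top μ _⟩

/-- **Positivity of cubes under product Gaussian measures with summable variances.**
Let `σ : ℕ → ℝ` with `∑ₖ σₖ² < ∞`, and let `μ^σ = ⊗ₖ gaussianReal 0 (σₖ²)` be
the product Gaussian measure on `ℝ^ℕ` — i.e. the probability measure whose
finite-dimensional marginals are the finite products of the Gaussian measures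
`gaussianReal 0 (σₖ²)`.  Then for every `L > 0`,
`μ^σ {a | ∀ k, |a k| ≤ L} > 0`. -/
theorem product_gaussian_cube_pos
    (σ : ℕ → ℝ) (hσ : Summable (fun k => σ k ^ 2))
    (μ : Measure (ℕ → ℝ)) [IsProbabilityMeasure μ]
    (hμ : ∀ n : ℕ, μ.map (fun a (i : Fin n) => a i)
        = Measure.pi (fun i : Fin n => gaussianReal 0 ⟨σ i ^ 2, sq_nonneg _⟩))
    (L : ℝ) (hL : 0 < L) :
    0 < μ {a : ℕ → ℝ | ∀ k, |a k| ≤ L} := by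
  set v : ℕ → ℝ≥0 := fun k ↦ ⟨σ k ^ 2, sq_nonneg _⟩
  set p : ℕ → ℝ := fun k ↦ (gaussianReal 0 (v k)).real {x | |x| ≤ L}
  have hnhds : {x : ℝ | |x| ≤ L} ∈ 𝓝 0 := by
    simpa [Metric.closedBall, Real.dist_eq] using Metric.closedBall_mem_nhds (0 : ℝ) hL
  have hp_pos (k : ℕ) : 0 < p k :=
    ENNReal.toReal_pos (gaussianReal_pos_of_mem_nhds hnhds).ne' (measure_ne_top _ _)
  have hp_dist (k : ℕ) : |p k - 1| ≤ v k / L ^ 2 := by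
    have hchebyshev : 1 - v k / L ^ 2 ≤ p k := by
      simpa only [sub_zero] using one_sub_div_sq_le_gaussianReal_abs_sub_le 0 (v k) hL
    rw [abs_sub_comm, abs_of_nonneg (sub_nonneg.2 measureReal_le_one)]
    linarith
  have hp_sum : Summable fun k ↦ |p k - 1| :=
    (hσ.div_const _).of_nonneg_of_le (fun _ ↦ abs_nonneg _) hp_dist
  have hlim := (Real.multipliable_of_summable_abs_sub_one hp_sum).hasProd.tendsto_prod_nat
  have hcube := ENNReal.tendsto_toReal (measure_ne_top _ _) |>.comp <|
    tendsto_prod_range_measure_of_map_eq_pi (ν := fun k ↦ gaussianReal 0 (v k)) hμ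
      (s := fun _ ↦ {x : ℝ | |x| ≤ L}) fun _ ↦ measurableSet_le (by fun_prop) measurable_const
  simp only [Function.comp_def, ENNReal.toReal_prod] at hcube
  have hreal : μ.real {a | ∀ k, |a k| ≤ L} = ∏' k, p k := tendsto_nhds_unique hcube hlim
  have hpos : 0 < μ.real {a | ∀ k, |a k| ≤ L} :=
    hreal ▸ Real.tprod_pos_of_summable_abs_sub_one hp_pos hp_sum
  exact (ENNReal.toReal_pos_iff.1 hpos).1
end

section
/- Let B be a real Banach space and v : ℕ → B a sequence with ∑_{k} ‖v_k‖ < ∞. Let σ : ℕ → ℝ, and suppose there exists a sequence x : ℕ → ℝ with x_k > 0 for all k, ∑_k x_k < ∞, and ∑_k σ_k²/x_k < ∞. Then the product Gaussian measure μ^σ assigns measure 1 to the set of sequences a ∈ ℝ^ℕ for which the partial sums ∑_{k=0}^{n−1} a_k v_k converge in B as n → ∞. (In particular, μ^σ gives full measure to ⋃_n {a : |a_k| ≤ √(x_k) for all k > n}, and every such a yields a convergent series.) -/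
/-!
By Chebyshev, the `k`-th coordinate, distributed as `gaussianReal 0 (σ k ^ 2)`, satisfies
`|a k| ≥ √(x k)` with probability at most `σ k ^ 2 / x k`. These probabilities are summable, so by
Borel–Cantelli almost every `a` has `|a k| < √(x k)` for all large `k`; since `x k → 0`, such `a` is
eventually bounded by `1`, and `∑ a k • v k` converges absolutely.
-/

open MeasureTheory ProbabilityTheory Filter
open scoped NNReal

lemma hasLaw_eval_of_map_restrict_eq_pi {α : Type*} [MeasurableSpace α] {μ : Measure (ℕ → α)}
    {ν : ℕ → Measure α} [∀ k, IsProbabilityMeasure (ν k)]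
    (hμ : ∀ n : ℕ, μ.map (fun a (i : Fin n) => a i) = Measure.pi (fun i : Fin n => ν i))
    (k : ℕ) : HasLaw (fun a => a k) (ν k) μ :=
  (measurePreserving_eval _ (Fin.last k)).comp_hasLaw
    ⟨(measurable_pi_lambda _ fun _ => measurable_pi_apply _).aemeasurable, hμ (k + 1)⟩

lemma gaussianReal_abs_sub_ge_le (m : ℝ) (v : ℝ≥0) {c : ℝ} (hc : 0 < c) :
    gaussianReal m v {t | c ≤ |t - m|} ≤ ENNReal.ofReal (v / c ^ 2) := by
  simpa [integral_id_gaussianReal, variance_id_gaussianReal] using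
    meas_ge_le_variance_div_sq (memLp_id_gaussianReal 2) hc

lemma ae_eventually_abs_lt_sqrt {μ : Measure (ℕ → ℝ)} {v : ℕ → ℝ≥0} {x : ℕ → ℝ}
    (hμ : ∀ k, HasLaw (fun a => a k) (gaussianReal 0 (v k)) μ)
    (hx : ∀ k, 0 < x k) (hvx : Summable fun k => (v k : ℝ) / x k) :
    ∀ᵐ a ∂μ, ∀ᶠ k in atTop, |a k| < √(x k) := by
  have htail (k : ℕ) : μ {a | √(x k) ≤ |a k|} ≤ ENNReal.ofReal (v k / x k) := by
    rw [(hμ k).measure_eq (p := fun t => √(x k) ≤ |t|)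
      (measurableSet_le (by fun_prop) (by fun_prop))]
    simpa [Real.sq_sqrt (hx k).le] using
      gaussianReal_abs_sub_ge_le 0 (v k) (Real.sqrt_pos.2 (hx k))
  have hsum : ∑' k, μ {a | √(x k) ≤ |a k|} ≠ ⊤ :=
    ne_top_of_le_ne_top hvx.tsum_ofReal_ne_top (ENNReal.tsum_le_tsum htail)
  filter_upwards [ae_eventually_notMem hsum] with a ha
  simpa using ha

lemma summable_smul_of_eventually_norm_le {𝕜 B : Type*} [NormedField 𝕜] [NormedAddCommGroup B]
    [NormedSpace 𝕜 B] [CompleteSpace B] {v : ℕ → B} (hv : Summable fun k => ‖v k‖)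
    {a : ℕ → 𝕜} {C : ℝ} (ha : ∀ᶠ k in atTop, ‖a k‖ ≤ C) : Summable fun k => a k • v k :=
  (hv.mul_left C).of_norm_bounded_eventually_nat <| by
    filter_upwards [ha] with k hk
    rw [norm_smul]
    gcongr

theorem product_gaussian_ae_convergent_series_general
    {B : Type*} [NormedAddCommGroup B] [NormedSpace ℝ B] [CompleteSpace B]
    (v : ℕ → B) (hv : Summable (fun k => ‖v k‖))
    (σ : ℕ → ℝ) (x : ℕ → ℝ) (hx : ∀ k, 0 < x k) (hxs : Summable x)
    (hσx : Summable (fun k => σ k ^ 2 / x k))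
    (μ : Measure (ℕ → ℝ))
    (hμ : ∀ n : ℕ, μ.map (fun a (i : Fin n) => a i)
        = Measure.pi (fun i : Fin n => gaussianReal 0 ⟨σ i ^ 2, sq_nonneg _⟩)) :
    μ {a : ℕ → ℝ | ∃ f : B,
        Filter.Tendsto (fun n => ∑ k ∈ Finset.range n, a k • v k) Filter.atTop (nhds f)} = 1 := by
  -- Instance search does not see through `gaussianReal 0 ⟨σ k ^ 2, _⟩`; a named variance helps.
  let var : ℕ → ℝ≥0 := fun k => ⟨σ k ^ 2, sq_nonneg _⟩
  have hlaw := hasLaw_eval_of_map_restrict_eq_pi (ν := fun k => gaussianReal 0 (var k)) hμ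
  have : IsProbabilityMeasure μ := (hlaw 0).isProbabilityMeasure
  have hsqrt_lt_one : ∀ᶠ k in atTop, √(x k) < 1 := by
    have hsqrt : Tendsto (fun k => √(x k)) atTop (nhds 0) := by
      simpa using hxs.tendsto_atTop_zero.sqrt
    exact hsqrt.eventually (gt_mem_nhds one_pos)
  have hconv : ∀ᵐ a ∂μ, ∃ f : B,
      Tendsto (fun n => ∑ k ∈ Finset.range n, a k • v k) atTop (nhds f) := by
    filter_upwards [ae_eventually_abs_lt_sqrt hlaw hx hσx] with a ha
    have hbdd : ∀ᶠ k in atTop, ‖a k‖ ≤ 1 := by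
      filter_upwards [ha, hsqrt_lt_one] with k hk hk1
      exact (hk.trans hk1).le
    exact ⟨_, (summable_smul_of_eventually_norm_le hv hbdd).hasSum.tendsto_sum_nat⟩
  exact (measure_congr (ae_eq_univ.2 hconv)).trans measure_univ

/-- **Full Gaussian measure of convergent coefficient sequences.**
Let `B` be a real Banach space and `v : ℕ → B` with `∑ₖ ‖v k‖ < ∞`.  Let
`σ : ℕ → ℝ` and suppose there is a sequence `x : ℕ → ℝ` with `x k > 0`,
`∑ₖ x k < ∞` and `∑ₖ σₖ² / x k < ∞`.  Then the product Gaussian measure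
`μ^σ = ⊗ₖ gaussianReal 0 (σₖ²)` — the probability measure on `ℝ^ℕ` whose
finite-dimensional marginals are finite products of `gaussianReal 0 (σₖ²)` —
assigns measure `1` to the set of `a : ℕ → ℝ` for which the partial sums
`∑_{k<n} a k • v k` converge in `B`. -/
theorem product_gaussian_ae_convergent_series
    {B : Type*} [NormedAddCommGroup B] [NormedSpace ℝ B] [CompleteSpace B]
    (v : ℕ → B) (hv : Summable (fun k => ‖v k‖))
    (σ : ℕ → ℝ) (x : ℕ → ℝ) (hx : ∀ k, 0 < x k) (hxs : Summable x)
    (hσx : Summable (fun k => σ k ^ 2 / x k))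
    (μ : Measure (ℕ → ℝ)) [IsProbabilityMeasure μ]
    (hμ : ∀ n : ℕ, μ.map (fun a (i : Fin n) => a i)
        = Measure.pi (fun i : Fin n => gaussianReal 0 ⟨σ i ^ 2, sq_nonneg _⟩)) :
    μ {a : ℕ → ℝ | ∃ f : B,
        Filter.Tendsto (fun n => ∑ k ∈ Finset.range n, a k • v k) Filter.atTop (nhds f)} = 1 :=
  product_gaussian_ae_convergent_series_general v hv σ x hx hxs hσx μ hμ
end

section
/- Let μ = ⊗_{n∈ℕ} gaussianReal 0 1 be the countable product of standard Gaussian measures on ℝ^ℕ, and let a : ℕ → ℝ. Define H_a = {x ∈ ℝ^ℕ : ∑_n a_n² x_n² < ∞} (i.e., the set of x for which n ↦ a_n² x_n² is Summable). Then μ(H_a) = 1 if ∑_n a_n² < ∞, and μ(H_a) = 0 if ∑_n a_n² = ∞. -/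
/-!
If `∑ aₙ² < ∞`, then `E ∑ aₙ² xₙ² = ∑ aₙ² < ∞`, so the series converges almost surely.
If `∑ aₙ² = ∞`, independence of the coordinates gives the Laplace transform
`E exp(-∑_{n<N} aₙ² xₙ²) = ∏_{n<N} (1 + 2aₙ²)^(-1/2) ≤ (1 + 2 ∑_{n<N} aₙ²)^(-1/2) → 0`,
so `exp(-∑ aₙ² xₙ²)` vanishes almost surely, i.e. the series diverges almost surely.
Independence comes from the hypothesis on the finite-dimensional marginals, which identifies `μ`
with the infinite product measure.
-/

open MeasureTheory ProbabilityTheory Filter Finset Real Topology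
open scoped ENNReal

theorem Finset.one_add_sum_le_prod_one_add {ι R : Type*} [CommSemiring R] [PartialOrder R]
    [IsOrderedRing R] (s : Finset ι) {f : ι → R} (hf : ∀ i ∈ s, 0 ≤ f i) :
    1 + ∑ i ∈ s, f i ≤ ∏ i ∈ s, (1 + f i) := by
  induction s using Finset.cons_induction with
  | empty => simp
  | cons j s hj ih =>
    rw [sum_cons, prod_cons]
    have hfj : 0 ≤ f j := hf j (mem_cons_self j s)
    have hfs : ∀ i ∈ s, 0 ≤ f i := fun i hi => hf i (mem_cons_of_mem hi)
    calc 1 + (f j + ∑ i ∈ s, f i)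
        ≤ 1 + (f j + ∑ i ∈ s, f i) + f j * ∑ i ∈ s, f i :=
          le_add_of_nonneg_right (mul_nonneg hfj (sum_nonneg hfs))
      _ = (1 + f j) * (1 + ∑ i ∈ s, f i) := by ring
      _ ≤ (1 + f j) * ∏ i ∈ s, (1 + f i) :=
          mul_le_mul_of_nonneg_left (ih hfs) (add_nonneg zero_le_one hfj)

theorem tendsto_prod_range_one_add_atTop_of_not_summable {b : ℕ → ℝ} (hb : ∀ n, 0 ≤ b n)
    (h : ¬ Summable b) : Tendsto (fun N => ∏ n ∈ range N, (1 + b n)) atTop atTop :=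
  tendsto_atTop_mono (fun _ => one_add_sum_le_prod_one_add _ fun n _ => hb n)
    (tendsto_atTop_add_const_left _ 1 ((not_summable_iff_tendsto_nat_atTop_of_nonneg hb).1 h))

section SeriesOfRandomVariables

variable {Ω : Type*} [MeasurableSpace Ω] {P : Measure Ω} {f : ℕ → Ω → ℝ}

theorem ae_summable_of_tsum_lintegral_ne_top (hf : ∀ n, Measurable (f n))
    (hf0 : ∀ n ω, 0 ≤ f n ω) (h : ∑' n, ∫⁻ ω, ENNReal.ofReal (f n ω) ∂P ≠ ∞) :
    ∀ᵐ ω ∂P, Summable fun n => f n ω := by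
  rw [← lintegral_tsum fun n => (hf n).ennreal_ofReal.aemeasurable] at h
  filter_upwards [ae_lt_top (Measurable.tsum fun n => (hf n).ennreal_ofReal) h] with ω hω
  simpa only [ENNReal.toReal_ofReal (hf0 _ ω)] using ENNReal.summable_toReal hω.ne

theorem ae_not_summable_of_tendsto_lintegral_exp_neg_sum (hf : ∀ n, Measurable (f n))
    (hf0 : ∀ n ω, 0 ≤ f n ω)
    (h : Tendsto (fun N => ∫⁻ ω, ENNReal.ofReal (exp (-∑ n ∈ range N, f n ω)) ∂P) atTop (𝓝 0)) :
    ∀ᵐ ω ∂P, ¬ Summable fun n => f n ω := by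
  -- `g ω` is `exp (-∑' n, f n ω)` where the series converges and `0` where it diverges,
  -- avoiding the junk value of the real `tsum`.
  set g : Ω → ℝ≥0∞ := fun ω => ⨅ N, ENNReal.ofReal (exp (-∑ n ∈ range N, f n ω))
  have hg : Measurable g := Measurable.iInf fun N => by fun_prop
  have hg0 : ∫⁻ ω, g ω ∂P = 0 :=
    le_antisymm (ge_of_tendsto' h fun N => lintegral_mono fun ω => iInf_le _ N) bot_le
  filter_upwards [(lintegral_eq_zero_iff hg).1 hg0] with ω hω hsum
  have hle : ENNReal.ofReal (exp (-∑' n, f n ω)) ≤ g ω := le_iInf fun N =>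
    ENNReal.ofReal_le_ofReal <| exp_le_exp.2 <| neg_le_neg <|
      hsum.sum_le_tsum _ fun n _ => hf0 n ω
  exact (ENNReal.ofReal_pos.2 (exp_pos _)).ne' (le_antisymm (hle.trans_eq hω) bot_le)

end SeriesOfRandomVariables

theorem eq_infinitePi_of_map_fin_eq_pi {X : Type*} [MeasurableSpace X] {ν : Measure X}
    [IsProbabilityMeasure ν] {μ : Measure (ℕ → X)}
    (hμ : ∀ n : ℕ, μ.map (fun x (i : Fin n) => x i) = Measure.pi (fun _ : Fin n => ν)) :
    μ = Measure.infinitePi (fun _ => ν) := by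
  classical
  refine Measure.eq_infinitePi _ fun s t ht => ?_
  obtain ⟨N, hsN⟩ := exists_nat_subset_range s
  have hbox : Set.pi (↑s) t = (fun x (i : Fin N) => x i) ⁻¹'
      Set.univ.pi (fun i : Fin N => if (i : ℕ) ∈ s then t i else Set.univ) := by
    ext x
    simp only [Set.mem_pi, Finset.mem_coe, Set.mem_preimage, Set.mem_univ, true_implies]
    constructor
    · intro hx i
      split_ifs with hi
      · exact hx i hi
      · trivial
    · intro hx n hn
      simpa [hn] using hx ⟨n, mem_range.1 (hsN hn)⟩
  rw [hbox, ← Measure.map_apply (by fun_prop) (.univ_pi fun i => by split_ifs <;> simp [ht]),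
    hμ, Measure.pi_pi, Fin.prod_univ_eq_prod_range (fun n => ν (if n ∈ s then t n else Set.univ))]
  simp only [apply_ite, measure_univ, prod_ite_mem, inter_eq_right.2 hsN]

theorem lintegral_prod_eval_infinitePi {ι : Type*} {X : ι → Type*} [∀ i, MeasurableSpace (X i)]
    (μ : ∀ i, Measure (X i)) [∀ i, IsProbabilityMeasure (μ i)] (s : Finset ι)
    {f : ∀ i, X i → ℝ≥0∞} (hf : ∀ i, Measurable (f i)) :
    ∫⁻ x, ∏ i ∈ s, f i (x i) ∂Measure.infinitePi μ = ∏ i ∈ s, ∫⁻ t, f i t ∂μ i := by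
  rw [lintegral_prod_eq_prod_lintegral_of_indepFun s _ (iIndepFun_infinitePi hf)
    fun i => (hf i).comp (measurable_pi_apply i)]
  exact prod_congr rfl fun i _ => (measurePreserving_eval_infinitePi μ i).lintegral_comp (hf i)

theorem lintegral_exp_neg_mul_sq_gaussianReal {c : ℝ} (hc : -(1 / 2) < c) :
    ∫⁻ t, ENNReal.ofReal (exp (-(c * t ^ 2))) ∂gaussianReal 0 1
      = ENNReal.ofReal ((1 + 2 * c) ^ (-(1 / 2 : ℝ))) := by
  have hc' : 0 < c + 1 / 2 := by linarith
  have hdens : ∀ t, gaussianPDF 0 1 t * ENNReal.ofReal (exp (-(c * t ^ 2)))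
      = ENNReal.ofReal ((√(2 * π))⁻¹ * exp (-(c + 1 / 2) * t ^ 2)) := fun t => by
    rw [gaussianPDF, ← ENNReal.ofReal_mul (gaussianPDFReal_nonneg 0 1 t)]
    simp only [gaussianPDFReal, NNReal.coe_one, mul_one, sub_zero]
    rw [mul_assoc, ← exp_add]
    ring_nf
  rw [gaussianReal_of_var_ne_zero 0 one_ne_zero,
    lintegral_withDensity_eq_lintegral_mul _ (measurable_gaussianPDF 0 1) (by fun_prop)]
  simp only [Pi.mul_apply, hdens]
  rw [← ofReal_integral_eq_lintegral_ofReal ((integrable_exp_neg_mul_sq hc').const_mul _)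
    (ae_of_all _ fun t => by positivity), integral_const_mul, integral_gaussian]
  congr 1
  rw [show π / (c + 1 / 2) = (2 * π) / (1 + 2 * c) by field_simp; ring, sqrt_div' _ (by linarith),
    rpow_neg (by linarith), ← sqrt_eq_rpow, inv_mul_eq_div, div_div_cancel_left' (by positivity)]

theorem ae_summable_mul_sq_infinitePi {ν : Measure ℝ} [IsProbabilityMeasure ν]
    (hν : MemLp id 2 ν) {w : ℕ → ℝ} (hw0 : ∀ n, 0 ≤ w n) (hw : Summable w) :
    ∀ᵐ x ∂Measure.infinitePi (fun _ => ν), Summable fun n => w n * x n ^ 2 := by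
  refine ae_summable_of_tsum_lintegral_ne_top (fun n => by fun_prop)
    (fun n x => mul_nonneg (hw0 n) (sq_nonneg _)) ?_
  have hmoment (n : ℕ) : ∫⁻ x, ENNReal.ofReal (w n * x n ^ 2) ∂Measure.infinitePi (fun _ => ν)
      = ENNReal.ofReal (w n) * ∫⁻ t, ENNReal.ofReal (t ^ 2) ∂ν := by
    rw [(measurePreserving_eval_infinitePi (fun _ => ν) n).lintegral_comp
      (f := fun t => ENNReal.ofReal (w n * t ^ 2)) (by fun_prop)]
    simp_rw [ENNReal.ofReal_mul (hw0 n)]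
    exact lintegral_const_mul _ (by fun_prop)
  simp_rw [hmoment, ENNReal.tsum_mul_right]
  exact ENNReal.mul_ne_top hw.tsum_ofReal_ne_top hν.integrable_sq.lintegral_lt_top.ne

theorem lintegral_exp_neg_sum_mul_sq_infinitePi_gaussianReal {w : ℕ → ℝ} (hw0 : ∀ n, 0 ≤ w n)
    (N : ℕ) :
    ∫⁻ x, ENNReal.ofReal (exp (-∑ n ∈ range N, w n * x n ^ 2))
        ∂Measure.infinitePi (fun _ => gaussianReal 0 1)
      = ENNReal.ofReal ((∏ n ∈ range N, (1 + 2 * w n)) ^ (-(1 / 2 : ℝ))) := by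
  simp_rw [← sum_neg_distrib, exp_sum, ENNReal.ofReal_prod_of_nonneg fun n _ => (exp_pos _).le]
  rw [lintegral_prod_eval_infinitePi _ _ (f := fun n t => ENNReal.ofReal (exp (-(w n * t ^ 2))))
    fun n => by fun_prop, ← finsetProd_rpow _ _ fun n _ => by linarith [hw0 n],
    ENNReal.ofReal_prod_of_nonneg fun n _ => rpow_nonneg (by linarith [hw0 n]) _]
  exact prod_congr rfl fun n _ => lintegral_exp_neg_mul_sq_gaussianReal (by linarith [hw0 n])

theorem ae_not_summable_mul_sq_infinitePi_gaussianReal {w : ℕ → ℝ} (hw0 : ∀ n, 0 ≤ w n)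
    (hw : ¬ Summable w) :
    ∀ᵐ x ∂Measure.infinitePi (fun _ => gaussianReal 0 1), ¬ Summable fun n => w n * x n ^ 2 := by
  refine ae_not_summable_of_tendsto_lintegral_exp_neg_sum (fun n => by fun_prop)
    (fun n x => mul_nonneg (hw0 n) (sq_nonneg _)) ?_
  simp_rw [lintegral_exp_neg_sum_mul_sq_infinitePi_gaussianReal hw0]
  have h2w : ¬ Summable fun n => 2 * w n := (summable_mul_left_iff two_ne_zero).not.2 hw
  simpa using ENNReal.tendsto_ofReal <| (tendsto_rpow_neg_atTop (by norm_num)).comp <|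
    tendsto_prod_range_one_add_atTop_of_not_summable (fun n => by linarith [hw0 n]) h2w

theorem product_gaussian_ellipsoid_dichotomy_general
    (a : ℕ → ℝ) (μ : Measure (ℕ → ℝ))
    (hμ : ∀ n : ℕ, μ.map (fun x (i : Fin n) => x i)
        = Measure.pi (fun _ : Fin n => gaussianReal 0 1)) :
    (Summable (fun n => a n ^ 2) →
      μ {x : ℕ → ℝ | Summable (fun n => a n ^ 2 * x n ^ 2)} = 1) ∧
    (¬ Summable (fun n => a n ^ 2) →
      μ {x : ℕ → ℝ | Summable (fun n => a n ^ 2 * x n ^ 2)} = 0) := by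
  obtain rfl := eq_infinitePi_of_map_fin_eq_pi hμ
  refine ⟨fun ha => ?_, fun ha => ?_⟩
  · have hae := ae_summable_mul_sq_infinitePi (memLp_id_gaussianReal (μ := 0) (v := 1) 2)
      (fun n => sq_nonneg (a n)) ha
    rw [measure_congr (eventuallyEq_univ.2 hae), measure_univ]
  · exact measure_eq_zero_iff_ae_notMem.2
      (ae_not_summable_mul_sq_infinitePi_gaussianReal (fun n => sq_nonneg (a n)) ha)

/-- **Yamasaki's dichotomy for the product standard Gaussian measure.**
Let `μ = ⊗ₙ gaussianReal 0 1` be the countable product of standard Gaussian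
measures on `ℝ^ℕ` — the probability measure whose finite-dimensional marginals
are finite products of standard Gaussians — and let `a : ℕ → ℝ`.  For
`H_a = {x | ∑ₙ aₙ² xₙ² < ∞}`: if `∑ₙ aₙ² < ∞` then `μ H_a = 1`, and if
`∑ₙ aₙ² = ∞` then `μ H_a = 0`. -/
theorem product_gaussian_ellipsoid_dichotomy
    (a : ℕ → ℝ) (μ : Measure (ℕ → ℝ)) [IsProbabilityMeasure μ]
    (hμ : ∀ n : ℕ, μ.map (fun x (i : Fin n) => x i)
        = Measure.pi (fun _ : Fin n => gaussianReal 0 1)) :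
    (Summable (fun n => a n ^ 2) →
      μ {x : ℕ → ℝ | Summable (fun n => a n ^ 2 * x n ^ 2)} = 1) ∧
    (¬ Summable (fun n => a n ^ 2) →
      μ {x : ℕ → ℝ | Summable (fun n => a n ^ 2 * x n ^ 2)} = 0) :=
  product_gaussian_ellipsoid_dichotomy_general a μ hμ
end

section
/- Let a be a real number with a > 1 and define h̄ : ℝ → ℂ by h̄(x) = ∫₀^∞ exp(−y^a · e^{iax}) dy. Then for every x with |x| < π/(2a), h̄ is differentiable at x with derivative h̄'(x) = −i · h̄(x). -/
open MeasureTheory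

/-- The function `h̄(x) = ∫₀^∞ exp(-yᵃ e^{iax}) dy`, where `yᵃ` is the real
power and the exponential is complex. -/
noncomputable def hbar (a : ℝ) (x : ℝ) : ℂ :=
  ∫ y in Set.Ioi (0 : ℝ), Complex.exp (-(y ^ a : ℝ) * Complex.exp (Complex.I * a * x))

/-!
Write `h̄(x) = Φ(e^{iax})` with `Φ(w) = ∫₀^∞ exp(-yᵃ w) dy`. On `Re w > 0` the integral `Φ` is
holomorphic (differentiation under the integral sign, with the bound `yᵃ exp(-(Re w / 2) yᵃ)`), and
the substitution `y ↦ t^{1/a} y` shows `Φ(t w) = t^{-1/a} Φ(w)` for real `t > 0`. Differentiating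
this homogeneity at `t = 1` gives Euler's relation `w Φ'(w) = -Φ(w)/a`, so by the chain rule
`h̄'(x) = Φ'(w) · i a w = -i Φ(w)` at `w = e^{iax}`, whose real part `cos(ax)` is positive.
-/

open Set Filter Complex Real

noncomputable def rpowExpIntegral (a : ℝ) (w : ℂ) : ℂ :=
  ∫ y in Ioi (0 : ℝ), cexp (-(y ^ a : ℝ) * w)

theorem hbar_eq_rpowExpIntegral_comp (a : ℝ) :
    hbar a = rpowExpIntegral a ∘ fun x : ℝ => cexp (I * a * x) :=
  rfl

lemma norm_cexp_neg_ofReal_mul (r : ℝ) (w : ℂ) : ‖cexp (-r * w)‖ = rexp (-w.re * r) := by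
  rw [Complex.norm_exp]
  simp [mul_comm]

lemma measurable_cexp_neg_rpow_mul (a : ℝ) (w : ℂ) :
    Measurable fun y : ℝ => cexp (-(y ^ a : ℝ) * w) := by
  fun_prop

lemma integrableOn_cexp_neg_rpow_mul {a : ℝ} (ha : 0 < a) {w : ℂ} (hw : 0 < w.re) :
    IntegrableOn (fun y : ℝ => cexp (-(y ^ a : ℝ) * w)) (Ioi 0) := by
  have hbound : IntegrableOn (fun y : ℝ => rexp (-w.re * y ^ a)) (Ioi 0) := by
    simpa using integrableOn_rpow_mul_exp_neg_mul_rpow (s := 0) (by norm_num) ha hw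
  refine hbound.mono' (measurable_cexp_neg_rpow_mul a w).aestronglyMeasurable ?_
  exact Eventually.of_forall fun y => (norm_cexp_neg_ofReal_mul _ w).le

lemma differentiableAt_rpowExpIntegral {a : ℝ} (ha : 0 < a) {w : ℂ} (hw : 0 < w.re) :
    DifferentiableAt ℂ (rpowExpIntegral a) w := by
  set r := w.re / 2 with hr_def
  have hr : 0 < r := by positivity
  have hre : ∀ z ∈ Metric.ball w r, r < z.re := by
    intro z hz
    have h := (abs_re_le_norm (z - w)).trans_lt (mem_ball_iff_norm.mp hz)
    rw [sub_re, abs_lt] at h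
    linarith [h.1]
  have hbound : ∀ᵐ y ∂volume.restrict (Ioi 0), ∀ z ∈ Metric.ball w r,
      ‖cexp (-(y ^ a : ℝ) * z) * (-(y ^ a : ℝ))‖ ≤ y ^ a * rexp (-r * y ^ a) := by
    filter_upwards [ae_restrict_mem measurableSet_Ioi] with y hy z hz
    have hya : 0 ≤ y ^ a := rpow_nonneg (le_of_lt hy) a
    rw [norm_mul, norm_cexp_neg_ofReal_mul, norm_neg, norm_real, norm_of_nonneg hya, mul_comm]
    gcongr
    nlinarith [hre z hz]
  have hderiv : ∀ᵐ y ∂volume.restrict (Ioi 0), ∀ z ∈ Metric.ball w r,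
      HasDerivAt (fun z => cexp (-(y ^ a : ℝ) * z)) (cexp (-(y ^ a : ℝ) * z) * (-(y ^ a : ℝ))) z :=
    Eventually.of_forall fun y z _ => by
      simpa using ((hasDerivAt_id z).const_mul (-((y ^ a : ℝ) : ℂ))).cexp
  exact (hasDerivAt_integral_of_dominated_loc_of_deriv_le (Metric.ball_mem_nhds w hr)
    (Eventually.of_forall fun z => (measurable_cexp_neg_rpow_mul a z).aestronglyMeasurable)
    (integrableOn_cexp_neg_rpow_mul ha hw)
    ((measurable_cexp_neg_rpow_mul a w).mul (by fun_prop)).aestronglyMeasurable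
    hbound (integrableOn_rpow_mul_exp_neg_mul_rpow (by linarith) ha hr) hderiv).2.differentiableAt

lemma rpowExpIntegral_ofReal_mul {a : ℝ} (ha : a ≠ 0) (w : ℂ) {t : ℝ} (ht : 0 < t) :
    rpowExpIntegral a (t * w) = (t ^ (-a⁻¹) : ℝ) * rpowExpIntegral a w := by
  have hc : 0 < t ^ a⁻¹ := rpow_pos_of_pos ht _
  have hsubst := integral_comp_mul_left_Ioi (fun y => cexp (-(y ^ a : ℝ) * w)) 0 hc
  rw [mul_zero, real_smul] at hsubst
  rw [rpowExpIntegral, rpowExpIntegral, rpow_neg ht.le, ← hsubst]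
  refine setIntegral_congr_fun measurableSet_Ioi fun y hy => ?_
  rw [mul_rpow hc.le (le_of_lt hy), ← rpow_mul ht.le, inv_mul_cancel₀ ha, rpow_one]
  push_cast
  ring_nf

lemma hasDerivAt_rpowExpIntegral {a : ℝ} (ha : 0 < a) {w : ℂ} (hw : 0 < w.re) :
    HasDerivAt (rpowExpIntegral a) (-rpowExpIntegral a w / (a * w)) w := by
  obtain ⟨D, hD⟩ : ∃ D, HasDerivAt (rpowExpIntegral a) D w :=
    ⟨_, (differentiableAt_rpowExpIntegral ha hw).hasDerivAt⟩
  have hw0 : w ≠ 0 := fun h => by simp [h] at hw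
  have hscale : HasDerivAt (fun t : ℝ => rpowExpIntegral a (t * w)) (D * w) 1 := by
    have hline : HasDerivAt (fun t : ℝ => (t : ℂ) * w) w 1 := by
      simpa using (hasDerivAt_id (1 : ℝ)).ofReal_comp.mul_const w
    exact HasDerivAt.comp (𝕜 := ℝ) 1 (by simpa using hD) hline
  have hpow : HasDerivAt (fun t : ℝ => ((t ^ (-a⁻¹) : ℝ) : ℂ) * rpowExpIntegral a w)
      ((-a⁻¹ : ℝ) * rpowExpIntegral a w) 1 := by
    simpa using ((hasDerivAt_rpow_const (p := -a⁻¹) (Or.inl one_ne_zero)).ofReal_comp).mul_const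
      (rpowExpIntegral a w)
  have heq : (fun t : ℝ => rpowExpIntegral a (t * w)) =ᶠ[nhds 1]
      fun t => ((t ^ (-a⁻¹) : ℝ) : ℂ) * rpowExpIntegral a w :=
    eventually_of_mem (Ioi_mem_nhds one_pos) fun t ht => rpowExpIntegral_ofReal_mul ha.ne' w ht
  have hDw : D * w = (-a⁻¹ : ℝ) * rpowExpIntegral a w :=
    (hscale.congr_of_eventuallyEq heq.symm).unique hpow
  have ha' : (a : ℂ) ≠ 0 := ofReal_ne_zero.mpr ha.ne'
  convert hD using 1
  rw [div_eq_iff (mul_ne_zero ha' hw0)]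
  push_cast at hDw
  field_simp at hDw
  linear_combination -hDw

/-- **The differential equation `h̄'(x) = -i h̄(x)`.**
For real `a > 1` and every `x` with `|x| < π/(2a)`, the function
`h̄(x) = ∫₀^∞ exp(-yᵃ e^{iax}) dy` is differentiable at `x` with derivative
`-i * h̄(x)`. -/
theorem hbar_hasDerivAt (a : ℝ) (ha : 1 < a) (x : ℝ) (hx : |x| < Real.pi / (2 * a)) :
    HasDerivAt (hbar a) (-Complex.I * hbar a x) x := by
  have ha0 : 0 < a := by linarith
  have hcos : 0 < Real.cos (a * x) := by
    refine cos_pos_of_mem_Ioo (abs_lt.mp ?_)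
    rw [abs_mul, abs_of_pos ha0]
    rw [lt_div_iff₀ (by positivity)] at hx
    linarith
  have hw : 0 < (cexp (I * a * x)).re := by
    rwa [show I * a * x = ((a * x : ℝ) : ℂ) * I by push_cast; ring, exp_ofReal_mul_I_re]
  have hexp : HasDerivAt (fun t : ℝ => cexp (I * a * t)) (cexp (I * a * x) * (I * a)) x := by
    simpa using ((hasDerivAt_id x).ofReal_comp.const_mul (I * a)).cexp
  have ha' : (a : ℂ) ≠ 0 := ofReal_ne_zero.mpr ha0.ne'
  rw [hbar_eq_rpowExpIntegral_comp, Function.comp_apply]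
  refine ((hasDerivAt_rpowExpIntegral ha0 hw).comp x hexp).congr_deriv ?_
  field_simp
end

section
/- Let a be a real number with a > 1. Then for every real x with |x| < π/(2a), ∫₀^∞ exp(−y^a · e^{iax}) dy = Γ(1 + 1/a) · e^{−ix}, where Γ is the real Gamma function. -/
/-!
For `Re z > 0` both `∫₀^∞ exp(-z yᵖ) dy` and `Γ(1 + 1/p) z^(-1/p)` are holomorphic in `z`,
the first by differentiation under the integral sign. They agree for real `z > 0` by the
substitution `t = z yᵖ`, hence on the whole right half-plane by the identity theorem.
For `z = e^{iax}` with `|ax| < π/2` we have `Re z = cos(ax) > 0`, and the principal power is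
`z^(-1/a) = e^{-ix}`.
-/

open MeasureTheory Set Filter Topology

namespace Complex

theorem exp_cpow {w : ℂ} (hw₁ : -Real.pi < w.im) (hw₂ : w.im ≤ Real.pi) (s : ℂ) :
    exp w ^ s = exp (w * s) := by
  rw [cpow_def_of_ne_zero (exp_ne_zero w), log_exp hw₁ hw₂]

theorem eqOn_re_pos_of_eq_ofReal {E : Type*} [NormedAddCommGroup E] [NormedSpace ℂ E]
    [CompleteSpace E] {f g : ℂ → E} (hf : DifferentiableOn ℂ f {z | 0 < z.re})
    (hg : DifferentiableOn ℂ g {z | 0 < z.re}) (hfg : ∀ r : ℝ, 0 < r → f r = g r) :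
    EqOn f g {z | 0 < z.re} := by
  have hU : IsOpen {z : ℂ | 0 < z.re} := isOpen_lt continuous_const continuous_re
  have hreal : ∃ᶠ r : ℝ in 𝓝[≠] 1, f r = g r :=
    ((eventually_gt_nhds one_pos).filter_mono nhdsWithin_le_nhds |>.mono hfg).frequently
  have hofReal : Tendsto ofReal (𝓝[≠] (1 : ℝ)) (𝓝[≠] (1 : ℂ)) :=
    continuous_ofReal.continuousWithinAt.tendsto_nhdsWithin fun r hr ↦ by
      simpa [← ofReal_one] using hr
  exact (hf.analyticOnNhd hU).eqOn_of_preconnected_of_frequently_eq (hg.analyticOnNhd hU)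
    (convex_halfSpace_re_gt 0).isPreconnected (show (1 : ℂ) ∈ {z : ℂ | 0 < z.re} by simp)
    (by simpa using hofReal.frequently hreal)

end Complex

section ExpNegMulRpow

open Complex

theorem norm_cexp_neg_mul_ofReal (z : ℂ) (t : ℝ) :
    ‖cexp (-z * t)‖ = Real.exp (-z.re * t) := by
  simp [norm_exp]

variable {p : ℝ}

theorem integrableOn_cexp_neg_mul_rpow (hp : 0 < p) {z : ℂ} (hz : 0 < z.re) :
    IntegrableOn (fun y : ℝ ↦ cexp (-z * (y ^ p : ℝ))) (Ioi 0) := by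
  refine (integrable_norm_iff (by fun_prop)).mp ?_
  simp_rw [norm_cexp_neg_mul_ofReal]
  simpa [IntegrableOn] using
    integrableOn_rpow_mul_exp_neg_mul_rpow (s := 0) neg_one_lt_zero hp hz

theorem hasDerivAt_integral_cexp_neg_mul_rpow (hp : 0 < p) {z₀ : ℂ} (hz₀ : 0 < z₀.re) :
    HasDerivAt (fun z : ℂ ↦ ∫ y in Ioi (0 : ℝ), cexp (-z * (y ^ p : ℝ)))
      (∫ y in Ioi (0 : ℝ), -(y ^ p : ℝ) * cexp (-z₀ * (y ^ p : ℝ))) z₀ := by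
  set δ := z₀.re / 2 with hδ_def
  have hδ : 0 < δ := half_pos hz₀
  have hball : ∀ z ∈ Metric.ball z₀ δ, δ < z.re := fun z hz ↦ by
    have := (abs_re_le_norm (z - z₀)).trans_lt (mem_ball_iff_norm.mp hz)
    rw [sub_re, abs_lt] at this
    linarith
  refine (hasDerivAt_integral_of_dominated_loc_of_deriv_le (μ := volume.restrict (Ioi 0))
    (F := fun z (y : ℝ) ↦ cexp (-z * (y ^ p : ℝ)))
    (F' := fun z (y : ℝ) ↦ -(y ^ p : ℝ) * cexp (-z * (y ^ p : ℝ)))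
    (bound := fun y : ℝ ↦ y ^ p * Real.exp (-δ * y ^ p)) (Metric.ball_mem_nhds z₀ hδ)
    (Eventually.of_forall fun z ↦ by fun_prop) (integrableOn_cexp_neg_mul_rpow hp hz₀)
    (by fun_prop) ?_ ?_ ?_).2
  · filter_upwards [ae_restrict_mem measurableSet_Ioi] with y hy z hz
    have hyp : 0 ≤ y ^ p := Real.rpow_nonneg (le_of_lt hy) p
    rw [norm_mul, norm_neg, norm_cexp_neg_mul_ofReal, norm_real, Real.norm_of_nonneg hyp]
    gcongr
    exact (hball z hz).le
  · simpa [IntegrableOn] using integrableOn_rpow_mul_exp_neg_mul_rpow (by linarith) hp hδ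
  · filter_upwards with y z _
    simpa [mul_comm] using ((hasDerivAt_id z).neg.mul_const ((y ^ p : ℝ) : ℂ)).cexp

theorem integral_cexp_neg_mul_rpow (hp : 0 < p) {z : ℂ} (hz : 0 < z.re) :
    ∫ y in Ioi (0 : ℝ), cexp (-z * (y ^ p : ℝ)) =
      z ^ (-1 / p : ℂ) * Real.Gamma (1 / p + 1) := by
  refine eqOn_re_pos_of_eq_ofReal (f := fun z ↦ ∫ y in Ioi (0 : ℝ), cexp (-z * (y ^ p : ℝ)))
    (fun w hw ↦
      (hasDerivAt_integral_cexp_neg_mul_rpow hp hw).differentiableAt.differentiableWithinAt)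
    (fun w hw ↦
      ((differentiableAt_id.cpow_const (Or.inl hw)).mul_const _).differentiableWithinAt)
    (fun r hr ↦ ?_) hz
  calc ∫ y in Ioi (0 : ℝ), cexp (-r * (y ^ p : ℝ))
      = ((∫ y in Ioi (0 : ℝ), Real.exp (-r * y ^ p) : ℝ) : ℂ) := by
        rw [← integral_complex_ofReal]
        push_cast
        rfl
    _ = (r : ℂ) ^ (-1 / p : ℂ) * Real.Gamma (1 / p + 1) := by
        rw [integral_exp_neg_mul_rpow hp hr, ofReal_mul, ofReal_cpow hr.le]
        push_cast
        rfl

end ExpNegMulRpow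

/-- **Evaluation of the integral `∫₀^∞ exp(-yᵃ e^{iax}) dy`.**
For real `a > 1` and every real `x` with `|x| < π/(2a)`,
`∫₀^∞ exp(-yᵃ e^{iax}) dy = Γ(1 + 1/a) e^{-ix}`, where `yᵃ` is the real power,
the exponentials are complex, and `Γ` is the real Gamma function. -/
theorem integral_exp_neg_rpow_mul_exp (a : ℝ) (ha : 1 < a) (x : ℝ)
    (hx : |x| < Real.pi / (2 * a)) :
    ∫ y in Set.Ioi (0 : ℝ), Complex.exp (-(y ^ a : ℝ) * Complex.exp (Complex.I * a * x))
      = (Real.Gamma (1 + 1 / a) : ℂ) * Complex.exp (-Complex.I * x) := by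
  have ha₀ : 0 < a := one_pos.trans ha
  have hax : |a * x| < Real.pi / 2 := by
    have := (lt_div_iff₀ (by positivity)).mp hx
    rw [abs_mul, abs_of_pos ha₀]
    linarith
  obtain ⟨hax₁, hax₂⟩ := abs_lt.mp hax
  have hI : Complex.I * a * x = ((a * x : ℝ) : ℂ) * Complex.I := by push_cast; ring
  have him : (((a * x : ℝ) : ℂ) * Complex.I).im = a * x := by simp
  have hz : 0 < (Complex.exp (Complex.I * a * x)).re := by
    rw [hI, Complex.exp_ofReal_mul_I_re]
    exact Real.cos_pos_of_mem_Ioo ⟨hax₁, hax₂⟩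
  have hexponent : ((a * x : ℝ) : ℂ) * Complex.I * (-1 / a) = -Complex.I * x := by
    have : (a : ℂ) ≠ 0 := Complex.ofReal_ne_zero.mpr ha₀.ne'
    push_cast
    field_simp
  simp_rw [neg_mul, mul_comm _ (Complex.exp _), ← neg_mul]
  rw [integral_cexp_neg_mul_rpow ha₀ hz, hI,
    Complex.exp_cpow (by rw [him]; linarith [Real.pi_pos]) (by rw [him]; linarith [Real.pi_pos]),
    hexponent, add_comm (1 / a), mul_comm]
end
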